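/- arXiv:cs/0606094 — 4 statements merged into one kernel-verified Lean document; each statement's English description precedes it below -/
import Mathlib

section
/- Let φ be an SL-formula over alphabet Σ and let k be the largest integer occurring in φ. For any two strings w, w' over Σ, if for every letter a ∈ Σ either (i) both w and w' contain more than k occurrences of a, or (ii) w and w' contain exactly the same number of occurrences of a, then w satisfies φ if and only if w' satisfies φ. -/
/-- SL-formulas over alphabet `σ`: atoms `tru`, `a^{=i}` (`eq a i`), `a^{≥i}` (`ge a i`),
closed under negation, conjunction, disjunction. -/
inductive SL (σ : Type) : Type where
  | tru : SL σ
  | eq (a : σ) (i : ℕ) : SL σ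
  | ge (a : σ) (i : ℕ) : SL σ
  | not (φ : SL σ) : SL σ
  | and (φ ψ : SL σ) : SL σ
  | or (φ ψ : SL σ) : SL σ

/-- Satisfaction of an SL-formula by a string `w : List σ`; `w.count a` is `#_a(w)`. -/
def SL.sat {σ : Type} [DecidableEq σ] (w : List σ) : SL σ → Prop
  | .tru => True
  | .eq a i => w.count a = i
  | .ge a i => i ≤ w.count a
  | .not φ => ¬ φ.sat w
  | .and φ ψ => φ.sat w ∧ ψ.sat w
  | .or φ ψ => φ.sat w ∨ ψ.sat w

/-- The largest integer occurring in an SL-formula. -/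
def SL.maxInt {σ : Type} : SL σ → ℕ
  | .tru => 0
  | .eq _ i => i
  | .ge _ i => i
  | .not φ => φ.maxInt
  | .and φ ψ => max φ.maxInt ψ.maxInt
  | .or φ ψ => max φ.maxInt ψ.maxInt

/-- if for every letter `a`, either both `w` and `w'` have more than `k`
occurrences of `a` (where `k` is the largest integer in `φ`), or they have exactly the same
number of occurrences of `a`, then `w ⊨ φ ↔ w' ⊨ φ`. -/
theorem sl_count_equiv {σ : Type} [DecidableEq σ] (φ : SL σ) (w w' : List σ)
    (h : ∀ a : σ, (φ.maxInt < w.count a ∧ φ.maxInt < w'.count a) ∨ w.count a = w'.count a) :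
    φ.sat w ↔ φ.sat w' := by
  induction φ with
  | tru => simp [SL.sat]
  | eq a i =>
    rcases h a with ⟨h1, h2⟩ | he
    · simp only [SL.maxInt] at h1 h2
      simp [SL.sat]; omega
    · simp [SL.sat, he]
  | ge a i =>
    rcases h a with ⟨h1, h2⟩ | he
    · simp only [SL.maxInt] at h1 h2
      simp [SL.sat]; omega
    · simp [SL.sat, he]
  | not φ ih =>
    simp only [SL.sat]
    rw [ih h]
  | and φ ψ ih1 ih2 =>
    simp only [SL.sat]
    rw [ih1 (fun a => (h a).imp (fun hp => ⟨lt_of_le_of_lt (le_max_left _ _) hp.1, lt_of_le_of_lt (le_max_left _ _) hp.2⟩) id),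
        ih2 (fun a => (h a).imp (fun hp => ⟨lt_of_le_of_lt (le_max_right _ _) hp.1, lt_of_le_of_lt (le_max_right _ _) hp.2⟩) id)]
  | or φ ψ ih1 ih2 =>
    simp only [SL.sat]
    rw [ih1 (fun a => (h a).imp (fun hp => ⟨lt_of_le_of_lt (le_max_left _ _) hp.1, lt_of_le_of_lt (le_max_left _ _) hp.2⟩) id),
        ih2 (fun a => (h a).imp (fun hp => ⟨lt_of_le_of_lt (le_max_right _ _) hp.1, lt_of_le_of_lt (le_max_right _ _) hp.2⟩) id)]
end

section
/- For every SL-formula φ over a finite alphabet Σ = {a₁,…,aₙ} with largest occurring integer k, φ is satisfiable if and only if there exists a string of the form a₁^{u₁} a₂^{u₂} ⋯ aₙ^{uₙ} with each uᵢ ∈ {0,…,k+1} that satisfies φ. -/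
/-- Satisfaction depends only on the count function. -/
lemma SL.sat_congr {σ : Type} [DecidableEq σ] (k : ℕ) (w v : List σ) (ψ : SL σ)
    (hk : ψ.maxInt ≤ k)
    (h : ∀ a, v.count a = min (w.count a) (k + 1)) :
    ψ.sat w ↔ ψ.sat v := by
  induction ψ with
  | tru => simp [SL.sat]
  | eq a i =>
      simp only [SL.maxInt] at hk
      simp only [SL.sat, h a]
      omega
  | ge a i =>
      simp only [SL.maxInt] at hk
      simp only [SL.sat, h a]
      omega
  | not φ ih =>
      simp only [SL.maxInt] at hk
      simp only [SL.sat, ih hk]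
  | and φ ψ ih1 ih2 =>
      simp only [SL.maxInt, max_le_iff] at hk
      simp only [SL.sat, ih1 hk.1, ih2 hk.2]
  | or φ ψ ih1 ih2 =>
      simp only [SL.maxInt, max_le_iff] at hk
      simp only [SL.sat, ih1 hk.1, ih2 hk.2]

lemma count_flatMap_replicate (n : ℕ) (u : Fin n → ℕ) (a : Fin n) :
    ((List.finRange n).flatMap fun i => List.replicate (u i) i).count a = u a := by
  rw [List.count_flatMap]
  rw [List.map_congr_left (l := List.finRange n)
    (f := List.count a ∘ fun i => List.replicate (u i) i)
    (g := fun i => if i = a then u i else 0)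
    (by intro i _; by_cases h : i = a <;> simp [h, List.count_replicate])]
  rw [← Fin.sum_univ_def]
  simp

/-- an SL-formula `φ` over the alphabet `Fin n = {a₁,…,aₙ}` with largest
integer `k = φ.maxInt` is satisfiable iff some string of the form
`a₁^{u₁} a₂^{u₂} ⋯ aₙ^{uₙ}` with every `uᵢ ∈ {0,…,k+1}` satisfies it. -/
theorem sl_small_model (n : ℕ) (φ : SL (Fin n)) :
    (∃ w : List (Fin n), φ.sat w) ↔
      ∃ u : Fin n → ℕ, (∀ i, u i ≤ φ.maxInt + 1) ∧
        φ.sat ((List.finRange n).flatMap fun i => List.replicate (u i) i) := by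
  constructor
  · rintro ⟨w, hw⟩
    refine ⟨fun i => min (w.count i) (φ.maxInt + 1), fun i => min_le_right _ _, ?_⟩
    rw [← SL.sat_congr φ.maxInt w _ φ le_rfl
      (fun a => by rw [count_flatMap_replicate])]
    exact hw
  · rintro ⟨u, _, hu⟩
    exact ⟨_, hu⟩
end

section
/- If Φ(x₁,…,xₙ) is a quantifier-free formula over ℚ built from linear atomic formulas, and U is the set of terms θ (not involving xₙ) such that xₙ < θ, xₙ > θ, or xₙ = θ is an atomic formula of Φ (after solving each atom for xₙ), then ∃xₙ Φ(x₁,…,xₙ) is equivalent over ℚ to the quantifier-free formula Φ_{-∞} ∨ Φ_{∞} ∨ ⋁_{θ,θ' ∈ U} Φ(x₁,…,x_{n-1}, (θ+θ')/2), where Φ_{-∞} (resp. Φ_{∞}) is obtained by replacing xₙ < θ by true (resp. false), xₙ > θ by false (resp. true), and xₙ = θ by false (resp. false). -/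
/-- A term not involving the last variable `xₙ`: a (rational-linear) function of the
remaining variables `x₁,…,x_{n-1}` (here represented abstractly by its value function). -/
abbrev QTerm (n : ℕ) := (Fin n → ℚ) → ℚ

/-- Atomic formulas, where each atom involving the distinguished variable `xₙ` has been
solved for `xₙ`: `xₙ < θ`, `xₙ > θ`, `xₙ = θ` with `θ` not involving `xₙ`, together with
`true`, `false`, and atoms `noX P` not involving `xₙ` at all. -/
inductive QAtom (n : ℕ) : Type where
  | tru : QAtom n
  | fls : QAtom n
  | ltX (θ : QTerm n) : QAtom n    -- xₙ < θ
  | gtX (θ : QTerm n) : QAtom n    -- xₙ > θ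
  | eqX (θ : QTerm n) : QAtom n    -- xₙ = θ
  | noX (P : (Fin n → ℚ) → Prop) : QAtom n

/-- Quantifier-free formulas: Boolean combinations of atoms. -/
inductive QFm (n : ℕ) : Type where
  | atom (A : QAtom n) : QFm n
  | not (φ : QFm n) : QFm n
  | and (φ ψ : QFm n) : QFm n
  | or (φ ψ : QFm n) : QFm n

/-- Evaluation of an atom at values `v` of `x₁,…,x_{n-1}` and value `x` of `xₙ`. -/
def QAtom.eval {n : ℕ} (v : Fin n → ℚ) (x : ℚ) : QAtom n → Prop
  | .tru => True
  | .fls => False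
  | .ltX θ => x < θ v
  | .gtX θ => θ v < x
  | .eqX θ => x = θ v
  | .noX P => P v

/-- Evaluation of a formula. -/
def QFm.eval {n : ℕ} (v : Fin n → ℚ) (x : ℚ) : QFm n → Prop
  | .atom A => A.eval v x
  | .not φ => ¬ φ.eval v x
  | .and φ ψ => φ.eval v x ∧ ψ.eval v x
  | .or φ ψ => φ.eval v x ∨ ψ.eval v x

/-- `Φ_{-∞}`: replace `xₙ < θ` by true, `xₙ > θ` by false, `xₙ = θ` by false. -/
def QAtom.minusInf {n : ℕ} : QAtom n → QAtom n
  | .ltX _ => .tru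
  | .gtX _ => .fls
  | .eqX _ => .fls
  | A => A

/-- `Φ_{∞}`: replace `xₙ < θ` by false, `xₙ > θ` by true, `xₙ = θ` by false. -/
def QAtom.plusInf {n : ℕ} : QAtom n → QAtom n
  | .ltX _ => .fls
  | .gtX _ => .tru
  | .eqX _ => .fls
  | A => A

def QFm.minusInf {n : ℕ} : QFm n → QFm n
  | .atom A => .atom A.minusInf
  | .not φ => .not φ.minusInf
  | .and φ ψ => .and φ.minusInf ψ.minusInf
  | .or φ ψ => .or φ.minusInf ψ.minusInf

def QFm.plusInf {n : ℕ} : QFm n → QFm n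
  | .atom A => .atom A.plusInf
  | .not φ => .not φ.plusInf
  | .and φ ψ => .and φ.plusInf ψ.plusInf
  | .or φ ψ => .or φ.plusInf ψ.plusInf

/-- The set `U` of terms `θ` such that `xₙ < θ`, `xₙ > θ` or `xₙ = θ` is an atom of `Φ`. -/
def QFm.terms {n : ℕ} : QFm n → List (QTerm n)
  | .atom (.ltX θ) => [θ]
  | .atom (.gtX θ) => [θ]
  | .atom (.eqX θ) => [θ]
  | .atom _ => []
  | .not φ => φ.terms
  | .and φ ψ => φ.terms ++ ψ.terms
  | .or φ ψ => φ.terms ++ ψ.terms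

lemma QFm.eval_agree {n : ℕ} (Φ : QFm n) (v : Fin n → ℚ) (x y : ℚ)
    (h : ∀ τ ∈ Φ.terms, (x < τ v ↔ y < τ v) ∧ (τ v < x ↔ τ v < y) ∧ (x = τ v ↔ y = τ v)) :
    Φ.eval v x ↔ Φ.eval v y := by
  induction Φ with
  | atom A =>
    cases A with
    | tru => simp [QFm.eval, QAtom.eval]
    | fls => simp [QFm.eval, QAtom.eval]
    | noX P => simp [QFm.eval, QAtom.eval]
    | ltX θ => exact (h θ (by simp [QFm.terms])).1
    | gtX θ => exact (h θ (by simp [QFm.terms])).2.1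
    | eqX θ => exact (h θ (by simp [QFm.terms])).2.2
  | not φ ih =>
    simp only [QFm.eval]
    rw [ih (fun τ hτ => h τ hτ)]
  | and φ ψ ih1 ih2 =>
    simp only [QFm.eval]
    rw [ih1 (fun τ hτ => h τ (by simp [QFm.terms, hτ])),
        ih2 (fun τ hτ => h τ (by simp [QFm.terms, hτ]))]
  | or φ ψ ih1 ih2 =>
    simp only [QFm.eval]
    rw [ih1 (fun τ hτ => h τ (by simp [QFm.terms, hτ])),
        ih2 (fun τ hτ => h τ (by simp [QFm.terms, hτ]))]

lemma QFm.eval_minusInf {n : ℕ} (Φ : QFm n) (v : Fin n → ℚ) (x y : ℚ)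
    (h : ∀ τ ∈ Φ.terms, x < τ v) :
    Φ.eval v x ↔ Φ.minusInf.eval v y := by
  induction Φ with
  | atom A =>
    cases A with
    | tru => simp [QFm.eval, QAtom.eval, QFm.minusInf, QAtom.minusInf]
    | fls => simp [QFm.eval, QAtom.eval, QFm.minusInf, QAtom.minusInf]
    | noX P => simp [QFm.eval, QAtom.eval, QFm.minusInf, QAtom.minusInf]
    | ltX θ =>
      have := h θ (by simp [QFm.terms])
      simp [QFm.eval, QAtom.eval, QFm.minusInf, QAtom.minusInf, this]
    | gtX θ =>
      have := h θ (by simp [QFm.terms])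
      simp [QFm.eval, QAtom.eval, QFm.minusInf, QAtom.minusInf, not_lt.mpr this.le]
    | eqX θ =>
      have := h θ (by simp [QFm.terms])
      simp [QFm.eval, QAtom.eval, QFm.minusInf, QAtom.minusInf, this.ne]
  | not φ ih =>
    simp only [QFm.eval, QFm.minusInf]
    rw [ih (fun τ hτ => h τ hτ)]
  | and φ ψ ih1 ih2 =>
    simp only [QFm.eval, QFm.minusInf]
    rw [ih1 (fun τ hτ => h τ (by simp [QFm.terms, hτ])),
        ih2 (fun τ hτ => h τ (by simp [QFm.terms, hτ]))]
  | or φ ψ ih1 ih2 =>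
    simp only [QFm.eval, QFm.minusInf]
    rw [ih1 (fun τ hτ => h τ (by simp [QFm.terms, hτ])),
        ih2 (fun τ hτ => h τ (by simp [QFm.terms, hτ]))]

lemma QFm.eval_plusInf {n : ℕ} (Φ : QFm n) (v : Fin n → ℚ) (x y : ℚ)
    (h : ∀ τ ∈ Φ.terms, τ v < x) :
    Φ.eval v x ↔ Φ.plusInf.eval v y := by
  induction Φ with
  | atom A =>
    cases A with
    | tru => simp [QFm.eval, QAtom.eval, QFm.plusInf, QAtom.plusInf]
    | fls => simp [QFm.eval, QAtom.eval, QFm.plusInf, QAtom.plusInf]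
    | noX P => simp [QFm.eval, QAtom.eval, QFm.plusInf, QAtom.plusInf]
    | ltX θ =>
      have := h θ (by simp [QFm.terms])
      simp [QFm.eval, QAtom.eval, QFm.plusInf, QAtom.plusInf, not_lt.mpr this.le]
    | gtX θ =>
      have := h θ (by simp [QFm.terms])
      simp [QFm.eval, QAtom.eval, QFm.plusInf, QAtom.plusInf, this]
    | eqX θ =>
      have := h θ (by simp [QFm.terms])
      simp [QFm.eval, QAtom.eval, QFm.plusInf, QAtom.plusInf, this.ne']
  | not φ ih =>
    simp only [QFm.eval, QFm.plusInf]
    rw [ih (fun τ hτ => h τ hτ)]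
  | and φ ψ ih1 ih2 =>
    simp only [QFm.eval, QFm.plusInf]
    rw [ih1 (fun τ hτ => h τ (by simp [QFm.terms, hτ])),
        ih2 (fun τ hτ => h τ (by simp [QFm.terms, hτ]))]
  | or φ ψ ih1 ih2 =>
    simp only [QFm.eval, QFm.plusInf]
    rw [ih1 (fun τ hτ => h τ (by simp [QFm.terms, hτ])),
        ih2 (fun τ hτ => h τ (by simp [QFm.terms, hτ]))]

/-- Ferrante–Rackoff elimination step: over ℚ,
`∃xₙ Φ(x₁,…,xₙ)` is equivalent to
`Φ_{-∞} ∨ Φ_{∞} ∨ ⋁_{θ,θ' ∈ U} Φ(x₁,…,x_{n-1}, (θ+θ')/2)`. -/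
theorem ferrante_rackoff_step {n : ℕ} (Φ : QFm n) (v : Fin n → ℚ) :
    (∃ x : ℚ, Φ.eval v x) ↔
      (Φ.minusInf.eval v 0 ∨ Φ.plusInf.eval v 0 ∨
        ∃ θ ∈ Φ.terms, ∃ θ' ∈ Φ.terms, Φ.eval v ((θ v + θ' v) / 2)) := by
  constructor
  · rintro ⟨x, hx⟩
    by_cases h1 : ∀ τ ∈ Φ.terms, x < τ v
    · exact Or.inl ((Φ.eval_minusInf v x 0 h1).mp hx)
    by_cases h2 : ∀ τ ∈ Φ.terms, τ v < x
    · exact Or.inr (Or.inl ((Φ.eval_plusInf v x 0 h2).mp hx))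
    by_cases heq : ∃ θ ∈ Φ.terms, θ v = x
    · obtain ⟨θ, hθ, he⟩ := heq
      refine Or.inr (Or.inr ⟨θ, hθ, θ, hθ, ?_⟩)
      have : (θ v + θ v) / 2 = x := by rw [he]; ring
      rwa [this]
    push_neg at h1 h2 heq
    obtain ⟨θ₀, hθ₀, hθ₀x⟩ := h1
    obtain ⟨θ₁, hθ₁, hθ₁x⟩ := h2
    have hθ₀x' : θ₀ v < x := lt_of_le_of_ne hθ₀x (heq θ₀ hθ₀)
    have hθ₁x' : x < θ₁ v := lt_of_le_of_ne hθ₁x (fun h => heq θ₁ hθ₁ h.symm)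
    set sL : Finset ℚ := (Φ.terms.map (· v)).toFinset.filter (· < x) with hsL
    set sR : Finset ℚ := (Φ.terms.map (· v)).toFinset.filter (x < ·) with hsR
    have hLne : sL.Nonempty := ⟨θ₀ v, by
      simp only [hsL, Finset.mem_filter, List.mem_toFinset, List.mem_map]
      exact ⟨⟨θ₀, hθ₀, rfl⟩, hθ₀x'⟩⟩
    have hRne : sR.Nonempty := ⟨θ₁ v, by
      simp only [hsR, Finset.mem_filter, List.mem_toFinset, List.mem_map]
      exact ⟨⟨θ₁, hθ₁, rfl⟩, hθ₁x'⟩⟩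
    set a := sL.max' hLne with ha
    set b := sR.min' hRne with hb
    have haMem := sL.max'_mem hLne
    have hbMem := sR.min'_mem hRne
    simp only [hsL, Finset.mem_filter, List.mem_toFinset, List.mem_map] at haMem
    simp only [hsR, Finset.mem_filter, List.mem_toFinset, List.mem_map] at hbMem
    obtain ⟨⟨θa, hθa, hθav⟩, hax⟩ := haMem
    obtain ⟨⟨θb, hθb, hθbv⟩, hxb⟩ := hbMem
    set m := (θa v + θb v) / 2 with hm
    have hab : θa v < θb v := by rw [hθav, hθbv]; exact lt_trans hax hxb
    have ham : θa v < m := by rw [hm]; linarith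
    have hmb : m < θb v := by rw [hm]; linarith
    -- every term value is ≤ a or ≥ b
    have hside : ∀ τ ∈ Φ.terms, τ v ≤ θa v ∨ θb v ≤ τ v := by
      intro τ hτ
      rcases lt_or_gt_of_ne (heq τ hτ) with hlt | hgt
      · left
        rw [hθav]
        exact Finset.le_max' sL (τ v) (by
          simp only [hsL, Finset.mem_filter, List.mem_toFinset, List.mem_map]
          exact ⟨⟨τ, hτ, rfl⟩, hlt⟩)
      · right
        rw [hθbv]
        exact Finset.min'_le sR (τ v) (by
          simp only [hsR, Finset.mem_filter, List.mem_toFinset, List.mem_map]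
          exact ⟨⟨τ, hτ, rfl⟩, hgt⟩)
    refine Or.inr (Or.inr ⟨θa, hθa, θb, hθb, ?_⟩)
    rw [← hm]
    refine (Φ.eval_agree v x m ?_).mp hx
    intro τ hτ
    have hax' : θa v < x := by rw [hθav]; exact hax
    have hxb' : x < θb v := by rw [hθbv]; exact hxb
    rcases hside τ hτ with hle | hge
    · exact ⟨by constructor <;> intro h <;> linarith,
        by constructor <;> intro h <;> linarith,
        iff_of_false (fun h => heq τ hτ h.symm) (fun h => by rw [← h] at hle; linarith)⟩
    · exact ⟨by constructor <;> intro h <;> linarith,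
        by constructor <;> intro h <;> linarith,
        iff_of_false (fun h => heq τ hτ h.symm) (fun h => by rw [← h] at hge; linarith)⟩
  · rintro (h | h | ⟨θ, hθ, θ', hθ', h⟩)
    · set s : Finset ℚ := insert 0 (Φ.terms.map (· v)).toFinset with hs
      have hne : s.Nonempty := ⟨0, by simp [hs]⟩
      refine ⟨s.min' hne - 1, (Φ.eval_minusInf v _ 0 ?_).mpr h⟩
      intro τ hτ
      have : τ v ∈ s := by
        simp only [hs, Finset.mem_insert, List.mem_toFinset, List.mem_map]
        exact Or.inr ⟨τ, hτ, rfl⟩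
      have := s.min'_le (τ v) this
      linarith
    · set s : Finset ℚ := insert 0 (Φ.terms.map (· v)).toFinset with hs
      have hne : s.Nonempty := ⟨0, by simp [hs]⟩
      refine ⟨s.max' hne + 1, (Φ.eval_plusInf v _ 0 ?_).mpr h⟩
      intro τ hτ
      have : τ v ∈ s := by
        simp only [hs, Finset.mem_insert, List.mem_toFinset, List.mem_map]
        exact Or.inr ⟨τ, hτ, rfl⟩
      have := s.le_max' (τ v) this
      linarith
    · exact ⟨_, h⟩
end

section
/- In the path-systems-to-DTD reduction, provability coincides with nonemptiness: given a finite set of propositions P, axioms A ⊆ P, and inference rules R ⊆ P × P × P, define a DTD d over alphabet P by letting d(c) contain the string ab for every (a,b,c) ∈ R, and additionally d(a) contains ε for every a ∈ A. Then for every p ∈ P, the tree language L((d,p)) is nonempty if and only if p is provable from A using R. -/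
/-- Unranked trees over alphabet `σ`. -/
inductive UTree (σ : Type) : Type where
  | node (a : σ) (ts : List (UTree σ)) : UTree σ

/-- The root label of a tree. -/
def UTree.root {σ : Type} : UTree σ → σ
  | .node a _ => a

/-- A tree partly satisfies the DTD content map `d` if at every node with children labeled
`c₁,…,cₙ`, the string `c₁⋯cₙ ∈ d(lab(u))` (leaves require `ε ∈ d(lab(u))`). -/
inductive PartSat {σ : Type} (d : σ → Set (List σ)) : UTree σ → Prop where
  | node (a : σ) (ts : List (UTree σ)) :
      ts.map UTree.root ∈ d a → (∀ t ∈ ts, PartSat d t) → PartSat d (.node a ts)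

/-- Provability in a path system `(P, A, R)`: axioms are provable, and `p₃` is provable
whenever `(p₁,p₂,p₃) ∈ R` and `p₁`, `p₂` are provable (least such set). -/
inductive Prov {P : Type} (A : Set P) (R : Set (P × P × P)) : P → Prop where
  | ax (p : P) : p ∈ A → Prov A R p
  | rule (p₁ p₂ p₃ : P) : (p₁, p₂, p₃) ∈ R → Prov A R p₁ → Prov A R p₂ → Prov A R p₃

/-- The DTD of the path-systems reduction: `d(c)` contains the string `ab` for every rule
`(a,b,c) ∈ R`, and contains `ε` for every axiom `c ∈ A`. -/
def pathSysDTD {P : Type} (A : Set P) (R : Set (P × P × P)) (c : P) : Set (List P) :=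
  {w | (∃ a b : P, w = [a, b] ∧ (a, b, c) ∈ R) ∨ (w = [] ∧ c ∈ A)}

/-- in the path-systems-to-DTD reduction, for every proposition `p`, the tree
language `L((d,p))` is nonempty iff `p` is provable from `A` using `R`. -/
theorem path_systems_reduction {P : Type} (A : Set P) (R : Set (P × P × P)) (p : P) :
    (∃ t : UTree P, PartSat (pathSysDTD A R) t ∧ t.root = p) ↔ Prov A R p := by
  constructor
  · rintro ⟨t, hsat, hroot⟩
    subst hroot
    induction hsat with
    | node a ts hmem _ ih =>
      rcases hmem with ⟨x, y, hxy, hR⟩ | ⟨hnil, hA⟩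
      · match ts, hxy with
        | [t1, t2], hxy =>
          simp at hxy
          exact Prov.rule x y a (by simpa [← hxy.1, ← hxy.2] using hR)
            (hxy.1 ▸ ih t1 (by simp)) (hxy.2 ▸ ih t2 (by simp))
      · exact Prov.ax a hA
  · intro h
    induction h with
    | ax q hq => exact ⟨.node q [], .node q [] (Or.inr ⟨rfl, hq⟩) (by simp), rfl⟩
    | rule p₁ p₂ p₃ hR _ _ ih₁ ih₂ =>
      obtain ⟨t₁, h₁, r₁⟩ := ih₁
      obtain ⟨t₂, h₂, r₂⟩ := ih₂
      exact ⟨.node p₃ [t₁, t₂],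
        .node p₃ [t₁, t₂] (Or.inl ⟨p₁, p₂, by simp [r₁, r₂], hR⟩)
          (by intro t ht; simp only [List.mem_cons, List.not_mem_nil, or_false] at ht; rcases ht with rfl | rfl; exacts [h₁, h₂]), rfl⟩
end
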